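/- arXiv:1603.01524 — 5 statements merged into one kernel-verified Lean document; each statement's English description precedes it below -/
import Mathlib

section
/- Any total preorder ≽ on actions Ω → ℝ (for all finite nonempty Ω simultaneously, in a compatible family) satisfying monotonicity, state symmetry, and independence of irrelevant information, determines indifference between any two actions with the same minimum and the same maximum: if min a = min b and max a = max b then a ∼ b. Consequently the preference is a function of the pair (min, max) of each action. -/
open Finset

/-- Worst outcome of an action on the state space `Fin (n+1)`. -/
noncomputable def minOut {n : ℕ} (a : Fin (n + 1) → ℝ) : ℝ :=
  Finset.univ.inf' Finset.univ_nonempty a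

/-- Best outcome of an action on the state space `Fin (n+1)`. -/
noncomputable def maxOut {n : ℕ} (a : Fin (n + 1) → ℝ) : ℝ :=
  Finset.univ.sup' Finset.univ_nonempty a

/-- Splitting a state `w0` into two: the extension of `a : Fin (n+1) → ℝ` to the
state space `Fin (n+2)` whose new (last) state has the same outcome as `w0`. -/
noncomputable def splitState {n : ℕ} (a : Fin (n + 1) → ℝ) (w0 : Fin (n + 1)) :
    Fin (n + 2) → ℝ :=
  Fin.snoc a (a w0)

/-- A compatible family of total preorders on actions over all finite nonempty
state spaces, satisfying monotonicity, state symmetry, and independence of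
irrelevant information, is indifferent between any two actions sharing the same
minimum and the same maximum; consequently the preference is a function of the
pair (min, max) of each action. -/
theorem stmt4 (P : ∀ n : ℕ, (Fin (n + 1) → ℝ) → (Fin (n + 1) → ℝ) → Prop)
    (hrefl : ∀ n (a : Fin (n + 1) → ℝ), P n a a)
    (htrans : ∀ n (a b c : Fin (n + 1) → ℝ), P n a b → P n b c → P n a c)
    (htotal : ∀ n (a b : Fin (n + 1) → ℝ), P n a b ∨ P n b a)
    -- monotonicity: pointwise domination implies weak preference
    (hmono : ∀ n (a b : Fin (n + 1) → ℝ), (∀ ω, b ω ≤ a ω) → P n a b)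
    -- state symmetry: invariance under permuting the states
    (hsymm : ∀ n (ψ : Fin (n + 1) ≃ Fin (n + 1)) (a b : Fin (n + 1) → ℝ),
      P n a b → P n (a ∘ ψ) (b ∘ ψ))
    -- independence of irrelevant information: splitting a state into two
    -- (duplicating its outcomes) preserves the preference
    (hiii : ∀ n (a b : Fin (n + 1) → ℝ) (w0 : Fin (n + 1)),
      P n a b → P (n + 1) (splitState a w0) (splitState b w0)) :
    (∀ n (a b : Fin (n + 1) → ℝ),
      minOut a = minOut b → maxOut a = maxOut b → P n a b ∧ P n b a) ∧
    (∀ n (a b c d : Fin (n + 1) → ℝ),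
      minOut a = minOut c → maxOut a = maxOut c →
      minOut b = minOut d → maxOut b = maxOut d →
      (P n a b ↔ P n c d)) := by

  classical
  -- indifference between an action and any of its permutations (swap case)
  have swapInd : ∀ n (a : Fin (n + 1) → ℝ) (x y : Fin (n + 1)),
      P n a (a ∘ Equiv.swap x y) ∧ P n (a ∘ Equiv.swap x y) a := by
    intro n a x y
    have hτ : (a ∘ Equiv.swap x y) ∘ Equiv.swap x y = a := by
      funext i; simp [Function.comp, Equiv.swap_apply_self]
    rcases htotal n a (a ∘ Equiv.swap x y) with h | h
    · refine ⟨h, ?_⟩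
      have h2 := hsymm n (Equiv.swap x y) _ _ h
      rwa [hτ] at h2
    · refine ⟨?_, h⟩
      have h2 := hsymm n (Equiv.swap x y) _ _ h
      rwa [hτ] at h2
  -- indifference between an action and any of its permutations
  have permInd : ∀ n (a : Fin (n + 1) → ℝ) (ψ : Equiv.Perm (Fin (n + 1))),
      P n a (a ∘ ψ) ∧ P n (a ∘ ψ) a := by
    intro n a ψ
    refine Equiv.Perm.swap_induction_on ψ ?_ ?_
    · simp only [Equiv.Perm.coe_one, Function.comp_id]
      exact ⟨hrefl n a, hrefl n a⟩
    · rintro f x y hxy ⟨h1, h2⟩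
      have hc : a ∘ ⇑(Equiv.swap x y * f) = (a ∘ ⇑(Equiv.swap x y)) ∘ ⇑f := by
        funext i; simp [Equiv.Perm.mul_apply, Function.comp]
      rw [hc]
      obtain ⟨s1, s2⟩ := swapInd n a x y
      have t1 := hsymm n f _ _ s1
      have t2 := hsymm n f _ _ s2
      exact ⟨htrans _ _ _ _ h1 t1, htrans _ _ _ _ t2 h2⟩
  -- indifference between the two canonical two-valued actions
  have ST : ∀ (k : ℕ) (m M : ℝ),
      P (k + 1) (fun i : Fin (k + 2) => if i = 0 then M else m)
        (fun i : Fin (k + 2) => if i = 0 then m else M) ∧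
      P (k + 1) (fun i : Fin (k + 2) => if i = 0 then m else M)
        (fun i : Fin (k + 2) => if i = 0 then M else m) := by
    intro k m M
    induction k with
    | zero =>
      have he : (fun i : Fin 2 => if i = 0 then m else M)
          = (fun i : Fin 2 => if i = 0 then M else m) ∘ ⇑(Equiv.swap 0 1) := by
        funext i
        fin_cases i <;> simp [Equiv.swap_apply_left, Equiv.swap_apply_right]
      rw [he]
      exact permInd 1 _ _
    | succ k ih =>
      obtain ⟨h1, h2⟩ := ih
      have hlast : (Fin.last (k + 1) : Fin (k + 2)) ≠ 0 := by
        simp [Fin.ext_iff]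
      have hlast2 : (Fin.last (k + 2) : Fin (k + 3)) ≠ 0 := by
        simp [Fin.ext_iff]
      have e1 : splitState (fun i : Fin (k + 2) => if i = 0 then M else m) (Fin.last (k + 1))
          = fun i : Fin (k + 3) => if i = 0 then M else m := by
        funext i
        refine Fin.lastCases ?_ ?_ i
        · simp [splitState, Fin.snoc_last, hlast, hlast2]
        · intro j
          simp [splitState, Fin.snoc_castSucc, Fin.castSucc_eq_zero_iff]
      have e2 : splitState (fun i : Fin (k + 2) => if i = 0 then m else M) (Fin.last (k + 1))
          = fun i : Fin (k + 3) => if i = 0 then m else M := by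
        funext i
        refine Fin.lastCases ?_ ?_ i
        · simp [splitState, Fin.snoc_last, hlast, hlast2]
        · intro j
          simp [splitState, Fin.snoc_castSucc, Fin.castSucc_eq_zero_iff]
      have g1 := hiii (k + 1) _ _ (Fin.last (k + 1)) h1
      have g2 := hiii (k + 1) _ _ (Fin.last (k + 1)) h2
      rw [e1, e2] at g1 g2
      exact ⟨g1, g2⟩
  -- main indifference claim
  have main : ∀ n (a b : Fin (n + 1) → ℝ),
      minOut a = minOut b → maxOut a = maxOut b → P n a b ∧ P n b a := by
    intro n a b hmin hmax
    cases n with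
    | zero =>
      have hab : a = b := by
        funext i
        have h0 : ∀ c : Fin 1 → ℝ, minOut c = c 0 := by
          intro c
          simp [minOut]
        have hi : i = 0 := by
          have := i.isLt
          exact Fin.ext (by omega)
        rw [hi]
        have := hmin
        rwa [h0 a, h0 b] at this
      subst hab
      exact ⟨hrefl _ _, hrefl _ _⟩
    | succ k =>
      set m := minOut a with hm
      set M := maxOut a with hM
      have key : ∀ c : Fin (k + 2) → ℝ, minOut c = m → maxOut c = M →
          P (k + 1) c (fun i : Fin (k + 2) => if i = 0 then M else m) ∧
          P (k + 1) (fun i : Fin (k + 2) => if i = 0 then m else M) c := by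
        intro c hcm hcM
        constructor
        · obtain ⟨i, -, hi⟩ := Finset.exists_mem_eq_sup' (Finset.univ_nonempty) c
          have hS : ∀ j, (fun i : Fin (k + 2) => if i = 0 then M else m) j
              ≤ (c ∘ ⇑(Equiv.swap 0 i)) j := by
            intro j
            by_cases hj : j = 0
            · subst hj
              simp only [if_pos rfl, Function.comp_apply, Equiv.swap_apply_left]
              rw [← hcM]
              exact le_of_eq hi
            · simp only [if_neg hj, Function.comp_apply]
              rw [← hcm]
              exact Finset.inf'_le c (Finset.mem_univ _)
          have h1 := hmono _ _ _ hS
          have h2 := hsymm _ (Equiv.swap 0 i) _ _ h1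
          have hcc : (c ∘ ⇑(Equiv.swap 0 i)) ∘ ⇑(Equiv.swap 0 i) = c := by
            funext j; simp [Function.comp, Equiv.swap_apply_self]
          rw [hcc] at h2
          exact htrans _ _ _ _ h2 (permInd _ _ (Equiv.swap 0 i)).2
        · obtain ⟨j, -, hj⟩ := Finset.exists_mem_eq_inf' (Finset.univ_nonempty) c
          have hT : ∀ i', c i'
              ≤ ((fun i : Fin (k + 2) => if i = 0 then m else M) ∘ ⇑(Equiv.swap 0 j)) i' := by
            intro i'
            by_cases h : i' = j
            · subst h
              simp only [Function.comp_apply, Equiv.swap_apply_right, if_pos rfl]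
              rw [← hcm]
              exact le_of_eq hj.symm
            · have hne : Equiv.swap 0 j i' ≠ 0 := by
                intro h0
                apply h
                have := (Equiv.swap 0 j).injective (a₁ := i') (a₂ := j)
                apply this
                rw [Equiv.swap_apply_right, h0]
              simp only [Function.comp_apply, if_neg hne]
              rw [← hcM]
              exact Finset.le_sup' c (Finset.mem_univ _)
          have h1 := hmono _ _ _ hT
          have h2 := (permInd _ (fun i : Fin (k + 2) => if i = 0 then m else M)
            (Equiv.swap 0 j)).1
          exact htrans _ _ _ _ h2 h1
      obtain ⟨haS, hTa⟩ := key a rfl rfl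
      obtain ⟨hbS, hTb⟩ := key b hmin.symm hmax.symm
      obtain ⟨hST, hTS⟩ := ST k m M
      exact ⟨htrans _ _ _ _ (htrans _ _ _ _ haS hST) hTb,
        htrans _ _ _ _ (htrans _ _ _ _ hbS hST) hTa⟩
  refine ⟨main, ?_⟩
  intro n a b c d h1 h2 h3 h4
  obtain ⟨hac, hca⟩ := main n a c h1 h2
  obtain ⟨hbd, hdb⟩ := main n b d h3 h4
  constructor
  · intro h
    exact htrans _ _ _ _ (htrans _ _ _ _ hca h) hbd
  · intro h
    exact htrans _ _ _ _ (htrans _ _ _ _ hac h) hdb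
end

section
/- LEX is the finest refinement of MIN among preferences determined by (min, max): if P is a total preorder on pairs (m, M) ∈ ℝ² with m ≤ M that is monotone in both coordinates and strictly refines MIN (i.e., m_a > m_b implies (m_a,M_a) strictly P-preferred to (m_b,M_b)), then whenever (m_a,M_a) is strictly P-preferred to (m_b,M_b), it is also strictly LEX-preferred, i.e., either m_a > m_b, or m_a = m_b and M_a > M_b. -/
/-- LEX is the finest refinement of MIN among preferences determined by
(min, max): any total preorder `P` on pairs `(m, M)` with `m ≤ M` that is
monotone in both coordinates and refines MIN has its strict preference
contained in strict LEX preference. -/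
theorem stmt5 (P : ℝ × ℝ → ℝ × ℝ → Prop)
    -- total preorder on the pairs (m, M) with m ≤ M
    (hrefl : ∀ p : ℝ × ℝ, p.1 ≤ p.2 → P p p)
    (htrans : ∀ p q r : ℝ × ℝ, p.1 ≤ p.2 → q.1 ≤ q.2 → r.1 ≤ r.2 →
      P p q → P q r → P p r)
    (htotal : ∀ p q : ℝ × ℝ, p.1 ≤ p.2 → q.1 ≤ q.2 → P p q ∨ P q p)
    -- monotone in both coordinates
    (hmono : ∀ p q : ℝ × ℝ, p.1 ≤ p.2 → q.1 ≤ q.2 → q.1 ≤ p.1 → q.2 ≤ p.2 → P p q)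
    -- P strictly refines MIN
    (hrefine : ∀ p q : ℝ × ℝ, p.1 ≤ p.2 → q.1 ≤ q.2 → q.1 < p.1 → P p q ∧ ¬ P q p) :
    -- strict P preference implies strict LEX preference
    ∀ p q : ℝ × ℝ, p.1 ≤ p.2 → q.1 ≤ q.2 → P p q → ¬ P q p →
      q.1 < p.1 ∨ (p.1 = q.1 ∧ q.2 < p.2) := by
  intro p q hp hq hPpq hnPqp
  rcases lt_trichotomy q.1 p.1 with h | h | h
  · exact Or.inl h
  · refine Or.inr ⟨h.symm, ?_⟩
    by_contra hle
    push_neg at hle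
    exact hnPqp (hmono q p hq hp h.ge hle)
  · exact absurd (hrefine q p hq hp h).1 hnPqp
end

section
/- There exists a two-player game with type ambiguity admitting no LEX Nash equilibrium in mixed strategies: the row player has utility matrix [[0,0],[-1,1]] (rows T,B; columns L,R), and the column player has one of two types with utilities [[0,1],[0,-2]] and [[0,2],[0,-1]] respectively. The unique MIN Nash equilibrium has type-1 column player play ½L+½R, type-2 column player play R, and the row player mix (2/3)T+(1/3)B; but the row player then strictly LEX-prefers deviating to pure B, so no LEX equilibrium exists. -/
/-!
A two-player game with type ambiguity that admits no LEX Nash equilibrium.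

The row player (a single type) chooses `T` or `B`; we parametrize his mixed
strategy by `p`, the probability of `T`.  The column player has two types, each
choosing `L` or `R`; type `k`'s mixed strategy is parametrized by `qk`, the
probability of `L`.  Row utilities: `[[0,0],[-1,1]]` (rows `T,B`, columns
`L,R`); column type 1 utilities: `[[0,1],[0,-2]]`; column type 2 utilities:
`[[0,2],[0,-1]]`.
-/

/-- Expected payoff of the row player (mixing `p` on `T`) against a column
strategy mixing `q` on `L`:  `p·0 + (1-p)·(q·(-1) + (1-q)·1)`. -/
def rowU (p q : ℝ) : ℝ := (1 - p) * (1 - 2 * q)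

/-- Expected payoff of column type 1 mixing `q` on `L` against row mix `p`:
`q·(p·0+(1-p)·0) + (1-q)·(p·1+(1-p)·(-2))`. -/
def col1U (p q : ℝ) : ℝ := (1 - q) * (3 * p - 2)

/-- Expected payoff of column type 2 mixing `q` on `L` against row mix `p`:
`q·0 + (1-q)·(p·2+(1-p)·(-1))`. -/
def col2U (p q : ℝ) : ℝ := (1 - q) * (3 * p - 1)

/-- Mixing probabilities. -/
def I01 : Set ℝ := Set.Icc 0 1

/-- The row player faces ambiguity about the column player's type; his MIN best
response maximizes his worst-case payoff over the two possible types. -/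
def RowMinBR (p q1 q2 : ℝ) : Prop :=
  ∀ p' ∈ I01, min (rowU p' q1) (rowU p' q2) ≤ min (rowU p q1) (rowU p q2)

/-- The row player's LEX best response: maximize the worst case, breaking ties
by the best case. -/
def RowLexBR (p q1 q2 : ℝ) : Prop :=
  RowMinBR p q1 q2 ∧
  ∀ p' ∈ I01, min (rowU p' q1) (rowU p' q2) = min (rowU p q1) (rowU p q2) →
    max (rowU p' q1) (rowU p' q2) ≤ max (rowU p q1) (rowU p q2)

/-- Each column type knows his own utility and faces no ambiguity (the row
player has a single type), so he simply maximizes expected utility. -/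
def ColBR (p q1 q2 : ℝ) : Prop :=
  (∀ q ∈ I01, col1U p q ≤ col1U p q1) ∧ (∀ q ∈ I01, col2U p q ≤ col2U p q2)

/-- MIN Nash equilibrium of the game. -/
def MinNE (p q1 q2 : ℝ) : Prop :=
  p ∈ I01 ∧ q1 ∈ I01 ∧ q2 ∈ I01 ∧ RowMinBR p q1 q2 ∧ ColBR p q1 q2

/-- LEX Nash equilibrium of the game. -/
def LexNE (p q1 q2 : ℝ) : Prop :=
  p ∈ I01 ∧ q1 ∈ I01 ∧ q2 ∈ I01 ∧ RowLexBR p q1 q2 ∧ ColBR p q1 q2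

lemma minNE_iff (p q1 q2 : ℝ) : MinNE p q1 q2 ↔ (p = 2 / 3 ∧ q1 = 1 / 2 ∧ q2 = 0) := by
  constructor
  · rintro ⟨⟨hp0, hp1⟩, ⟨hq10, hq11⟩, ⟨hq20, hq21⟩, hrow, hc1, hc2⟩
    have h01 : (0:ℝ) ∈ I01 := ⟨le_refl 0, by norm_num⟩
    have h11' : (1:ℝ) ∈ I01 := ⟨by norm_num, le_refl 1⟩
    have G1 := hc1 0 h01
    have G2 := hc1 1 h11'
    have G3 := hc2 0 h01
    have G4 := hc2 1 h11'
    simp only [col1U, col2U] at G1 G2 G3 G4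
    have F1top := hrow 1 h11'
    have F3top := hrow 0 h01
    simp only [rowU] at F1top F3top
    have hz : ((1:ℝ) - 1) * (1 - 2 * q1) ⊓ ((1:ℝ) - 1) * (1 - 2 * q2) = 0 := by norm_num
    rw [hz] at F1top
    have hm : ((1:ℝ) - 0) * (1 - 2 * q1) ⊓ ((1:ℝ) - 0) * (1 - 2 * q2)
        = (1 - 2 * q1) ⊓ (1 - 2 * q2) := by norm_num
    rw [hm] at F3top
    have F1 : 0 ≤ (1 - p) * (1 - 2 * q1) := le_trans F1top (min_le_left _ _)
    have F2 : 0 ≤ (1 - p) * (1 - 2 * q2) := le_trans F1top (min_le_right _ _)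
    have F3 : (1 - 2*q1) ⊓ (1 - 2*q2) ≤ (1 - p) * (1 - 2 * q1) :=
      le_trans F3top (min_le_left _ _)
    have hplt : p < 1 := by
      rcases lt_or_eq_of_le hp1 with h | h
      · exact h
      · exfalso
        rw [← h] at G1 G3
        have hq1z : q1 ≤ 0 := by nlinarith
        have hq2z : q2 ≤ 0 := by nlinarith
        have h1 : (1:ℝ) ≤ (1 - 2*q1) ⊓ (1 - 2*q2) := le_min (by linarith) (by linarith)
        nlinarith [F3]
    have hq1half : q1 ≤ 1/2 := by nlinarith
    have hq2half : q2 ≤ 1/2 := by nlinarith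
    have hpge : 2/3 ≤ p := by nlinarith
    have hq2e : q2 = 0 := by nlinarith
    have hmin : (1 - 2*q1) ⊓ (1 - 2*q2) = 1 - 2*q1 := by
      apply min_eq_left; rw [hq2e]; linarith
    rw [hmin] at F3
    have h5 : p * (1 - 2*q1) ≤ 0 := by nlinarith [F3]
    have h6 : 1 - 2*q1 ≤ 0 := by nlinarith [h5, hpge]
    have hq1e : q1 = 1/2 := le_antisymm hq1half (by linarith)
    rw [hq1e] at G1
    have hple : p ≤ 2/3 := by linarith [G1]
    exact ⟨le_antisymm hple hpge, hq1e, hq2e⟩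
  · rintro ⟨rfl, rfl, rfl⟩
    refine ⟨⟨by norm_num, by norm_num⟩, ⟨by norm_num, by norm_num⟩, ⟨by norm_num, by norm_num⟩, ?_, ?_, ?_⟩
    · intro p' hp'
      obtain ⟨hp'0, hp'1⟩ := hp'
      simp only [rowU]
      have e1 : (1 - p') * (1 - 2 * (1/2 : ℝ)) = 0 := by ring
      have e2 : ((1:ℝ) - 2/3) * (1 - 2 * (1/2)) = 0 := by ring
      rw [e1, e2]
      have e3 : (0:ℝ) ⊓ ((1 - 2/3) * (1 - 2*0)) = 0 := by
        apply min_eq_left; norm_num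
      rw [e3]
      exact min_le_left _ _
    · intro q hq
      obtain ⟨hq0, hq1⟩ := hq
      simp only [col1U]
      nlinarith
    · intro q hq
      obtain ⟨hq0, hq1⟩ := hq
      simp only [col2U]
      nlinarith

/-- The unique MIN Nash equilibrium has column type 1 play `½L+½R`, column
type 2 play `R`, and the row player mix `(2/3)T+(1/3)B`; and the game has no
LEX Nash equilibrium in mixed strategies. -/
theorem stmt10 :
    (∀ p q1 q2 : ℝ, MinNE p q1 q2 ↔ (p = 2 / 3 ∧ q1 = 1 / 2 ∧ q2 = 0)) ∧
    ¬ ∃ p q1 q2 : ℝ, LexNE p q1 q2 := by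
  refine ⟨minNE_iff, ?_⟩
  rintro ⟨p, q1, q2, hp, hq1, hq2, ⟨hminbr, hlex⟩, hcol⟩
  obtain ⟨rfl, rfl, rfl⟩ := (minNE_iff p q1 q2).mp ⟨hp, hq1, hq2, hminbr, hcol⟩
  have h01 : (0:ℝ) ∈ I01 := ⟨le_refl 0, by norm_num⟩
  have h := hlex 0 h01 (by norm_num [rowU])
  norm_num [rowU] at h
end

section
/- In a coordination game with type ambiguity, for each nonempty location set L with all maps f^i : T^i → L (type to best location in L) surjective, the profile where every type plays f^i is the unique pure LEX Nash equilibrium a with L(a) = L. -/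
open Finset

section Coordination

variable {ι M : Type*} [Fintype ι] [DecidableEq ι] [Fintype M] [DecidableEq M]
  [Nonempty M] {τ : ι → Type*} [∀ i, Fintype (τ i)] [∀ i, Nonempty (τ i)]

/-- Utility of player `i` of type `t` choosing location `l`, when the other
players' types are `ω` and everybody plays the (pure, type-contingent) profile
`a`.  Here `val i t : M → ℝ` is an (injective, `(0,1)`-valued) utility over
locations representing type `t`'s strict preference, so `k + val i t l`
(for `k` the number of other players met) represents the coordination
preference: meet as many players as possible, break ties by the location, and
be indifferent among all outcomes where nobody is met. -/
noncomputable def coordU (val : ∀ i, τ i → M → ℝ) (a : ∀ i, τ i → M) (i : ι)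
    (t : τ i) (l : M) (ω : ∀ j, τ j) : ℝ :=
  let k := (Finset.univ.filter (fun j => j ≠ i ∧ a j (ω j) = l)).card
  if k = 0 then 0 else k + val i t l

/-- Worst-case utility of the action `l` over the possible type profiles of the
other players. -/
noncomputable def coordWorst (val : ∀ i, τ i → M → ℝ) (a : ∀ i, τ i → M) (i : ι)
    (t : τ i) (l : M) : ℝ :=
  Finset.univ.inf' Finset.univ_nonempty (fun ω : ∀ j, τ j => coordU val a i t l ω)

/-- Best-case utility of the action `l` over the possible type profiles of the
other players. -/
noncomputable def coordBest (val : ∀ i, τ i → M → ℝ) (a : ∀ i, τ i → M) (i : ι)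
    (t : τ i) (l : M) : ℝ :=
  Finset.univ.sup' Finset.univ_nonempty (fun ω : ∀ j, τ j => coordU val a i t l ω)

/-- `l` is a LEX best response of type `t` of player `i` to the profile `a`:
it maximizes the worst-case outcome, and among such maximizers the best-case
outcome. -/
def CoordLexBR (val : ∀ i, τ i → M → ℝ) (a : ∀ i, τ i → M) (i : ι) (t : τ i)
    (l : M) : Prop :=
  (∀ l', coordWorst val a i t l' ≤ coordWorst val a i t l) ∧
  (∀ l', coordWorst val a i t l' = coordWorst val a i t l →
    coordBest val a i t l' ≤ coordBest val a i t l)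

/-- A pure LEX Nash equilibrium: every type of every player LEX-best-responds. -/
def CoordLexNE (val : ∀ i, τ i → M → ℝ) (a : ∀ i, τ i → M) : Prop :=
  ∀ i t, CoordLexBR val a i t (a i t)

/-- The set of locations chosen by some type of some player in the profile `a`. -/
def Lset (a : ∀ i, τ i → M) : Set M := {l | ∃ i t, a i t = l}

/-- `l` is type `t`'s most preferred location in `L`. -/
def IsBestIn (val : ∀ i, τ i → M → ℝ) (i : ι) (t : τ i) (L : Finset M)
    (l : M) : Prop :=
  l ∈ L ∧ ∀ l' ∈ L, val i t l' ≤ val i t l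

/-!
Valuations lie in `(0, 1)`, so a type ranks locations first by the number of other players met
and only then by its own order. Since the other players' types vary independently, the worst
(best) case at `l` meets exactly the other players who play `l` with every (some) type.

If every type goes to its favourite location of `L`, surjectivity makes every player's range
equal to `L`: worst cases vanish unless `L` is a singleton, and the best case is largest at the
favourite location. Conversely, in an equilibrium with `L(b) = L`, constant players must all sit
at one location, which then attracts everybody and makes `L` a singleton. Otherwise all worst
cases vanish, each type goes where the most other players can be met, and a counting argument
shows that every player reaches every location of `L`; the tie is then broken by the type's
order.
-/

section OthersCount

variable {ι M : Type*} [Fintype ι] [DecidableEq ι] (R : ι → M → Prop)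
  [∀ j l, Decidable (R j l)]

def othersCount (i : ι) (l : M) : ℕ :=
  #{j | j ≠ i ∧ R j l}

variable {R} {i j : ι} {l m : M}

lemma othersCount_eq_card_erase (i : ι) (l : M) :
    othersCount R i l = #(({j | R j l} : Finset ι).erase i) := by
  rw [othersCount]; congr 1; ext j; simp

lemma othersCount_add_one (h : R i l) : othersCount R i l + 1 = #{j | R j l} := by
  rw [othersCount_eq_card_erase, card_erase_add_one (by simpa using h)]

lemma othersCount_eq_card (h : ¬R i l) : othersCount R i l = #{j | R j l} := by
  rw [othersCount_eq_card_erase, erase_eq_of_notMem (by simpa using h)]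

lemma card_le_othersCount_add_one (i : ι) (l : M) : #{j | R j l} ≤ othersCount R i l + 1 := by
  rw [othersCount_eq_card_erase]
  have := pred_card_le_card_erase (s := ({j | R j l} : Finset ι)) (a := i)
  omega

lemma othersCount_pos (hji : j ≠ i) (h : R j l) : 0 < othersCount R i l :=
  card_pos.mpr ⟨j, by simp [hji, h]⟩

lemma exists_rel_of_othersCount_ne_zero (h : othersCount R i l ≠ 0) : ∃ j ≠ i, R j l := by
  obtain ⟨j, hj⟩ := card_ne_zero.mp h
  exact ⟨j, by simpa using hj⟩

lemma othersCount_mono {R' : ι → M → Prop} [∀ j l, Decidable (R' j l)] {l' : M}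
    (h : ∀ j ≠ i, R j l → R' j l') : othersCount R i l ≤ othersCount R' i l' :=
  card_le_card fun j hj => by
    simp only [mem_filter, mem_univ, true_and] at hj ⊢
    exact ⟨hj.1, h j hj.1 hj.2⟩

/- With `Q l := #{j | R j l}`: if `R j l`, `R i m` and not `R i l`, then player `i` sees
`Q l ≤ Q m - 1` while player `j` sees `Q m - 1 ≤ Q l - 1`. -/
lemma rel_of_othersCount_le (hR : ∀ j c, R j c → ∀ l, othersCount R j l ≤ othersCount R j c)
    (hjl : R j l) (him : R i m) : R i l := by
  by_contra hil
  have h₁ := hR i m him l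
  have h₂ := hR j l hjl m
  have := othersCount_eq_card hil
  have := othersCount_add_one (i := i) him
  have := othersCount_add_one (i := j) hjl
  have := card_le_othersCount_add_one (R := R) j m
  omega

end OthersCount

lemma exists_pi_iff_exists {ι : Type*} {τ : ι → Type*} [∀ i, Nonempty (τ i)]
    (p : ∀ i, τ i → Prop) : ∃ ω : ∀ i, τ i, ∀ i, p i (ω i) ↔ ∃ s, p i s := by
  have (i : ι) : ∃ s, (∃ s', p i s') → p i s := by
    by_cases h : ∃ s', p i s'
    · exact h.imp fun s hs _ => hs
    · exact ⟨Classical.arbitrary _, fun h' => absurd h' h⟩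
  choose ω hω using this
  exact ⟨ω, fun i => ⟨fun h => ⟨ω i, h⟩, hω i⟩⟩

section MeetPayoff

def meetPayoff (k : ℕ) (v : ℝ) : ℝ :=
  if k = 0 then 0 else k + v

variable {k k' : ℕ} {v v' : ℝ}

@[simp] lemma meetPayoff_zero (v : ℝ) : meetPayoff 0 v = 0 := rfl

lemma meetPayoff_of_ne_zero (hk : k ≠ 0) (v : ℝ) : meetPayoff k v = k + v := if_neg hk

lemma meetPayoff_nonneg (hv : 0 ≤ v) : 0 ≤ meetPayoff k v := by
  unfold meetPayoff; split_ifs <;> positivity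

lemma meetPayoff_le_meetPayoff (hk : k ≤ k') (hv : v ≤ v') (hv₀ : 0 ≤ v) :
    meetPayoff k v ≤ meetPayoff k' v' := by
  rcases Nat.eq_zero_or_pos k with rfl | hk₀
  · exact meetPayoff_nonneg (hv₀.trans hv)
  · rw [meetPayoff_of_ne_zero hk₀.ne', meetPayoff_of_ne_zero (by omega)]
    gcongr

lemma meetPayoff_lt_meetPayoff (hk : k < k') (hv : v < 1) (hv' : 0 < v') :
    meetPayoff k v < meetPayoff k' v' := by
  rw [meetPayoff_of_ne_zero (by omega : k' ≠ 0)]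
  rcases Nat.eq_zero_or_pos k with rfl | hk₀
  · simp only [meetPayoff_zero]; positivity
  · rw [meetPayoff_of_ne_zero hk₀.ne']
    have : (k : ℝ) + 1 ≤ k' := by exact_mod_cast hk
    linarith

lemma meetPayoff_le_meetPayoff_iff (hk : k ≠ 0) : meetPayoff k v ≤ meetPayoff k v' ↔ v ≤ v' := by
  rw [meetPayoff_of_ne_zero hk, meetPayoff_of_ne_zero hk, add_le_add_iff_left]

end MeetPayoff

section Payoffs

variable {ι M : Type*} [Fintype ι] [DecidableEq ι] [DecidableEq M] {τ : ι → Type*}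
  {val : ∀ i, τ i → M → ℝ} {a : ∀ i, τ i → M} {i : ι} {t : τ i} {l : M}

lemma coordU_eq_meetPayoff (ω : ∀ j, τ j) :
    coordU val a i t l ω = meetPayoff (othersCount (fun j m => a j (ω j) = m) i l) (val i t l) :=
  rfl

variable [∀ i, Fintype (τ i)] [∀ i, Nonempty (τ i)]

/- The other players' types can be chosen independently, so the adversary lets every player who
can avoid `l` do so. -/
lemma coordWorst_eq (hv : 0 ≤ val i t l) :
    coordWorst val a i t l =
      meetPayoff (othersCount (fun j m => ∀ s, a j s = m) i l) (val i t l) := by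
  obtain ⟨ω, hω⟩ := exists_pi_iff_exists fun j s => a j s ≠ l
  refine le_antisymm ?_ (le_inf' _ _ fun ω _ => ?_)
  · refine (inf'_le _ (mem_univ ω)).trans_eq ?_
    rw [coordU_eq_meetPayoff]
    congr 1
    refine le_antisymm (othersCount_mono fun j _ h s => ?_) (othersCount_mono fun j _ h => h _)
    by_contra hs
    exact (hω j).mpr ⟨s, hs⟩ h
  · exact meetPayoff_le_meetPayoff (othersCount_mono fun j _ h => h (ω j)) le_rfl hv

lemma coordWorst_eq_zero (hv : 0 ≤ val i t l) (h : ∀ j, ∃ s, a j s ≠ l) :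
    coordWorst val a i t l = 0 := by
  rw [coordWorst_eq hv]
  convert meetPayoff_zero _
  by_contra hF
  obtain ⟨j, -, hj⟩ := exists_rel_of_othersCount_ne_zero hF
  obtain ⟨s, hs⟩ := h j
  exact hs (hj s)

lemma coordBest_eq (hv : 0 ≤ val i t l) :
    coordBest val a i t l =
      meetPayoff (othersCount (fun j m => ∃ s, a j s = m) i l) (val i t l) := by
  obtain ⟨ω, hω⟩ := exists_pi_iff_exists fun j s => a j s = l
  refine le_antisymm (sup'_le _ _ fun ω _ => ?_) ?_
  · exact meetPayoff_le_meetPayoff (othersCount_mono fun j _ h => ⟨ω j, h⟩) le_rfl hv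
  · refine le_trans (le_of_eq ?_) (le_sup' _ (mem_univ ω))
    rw [coordU_eq_meetPayoff]
    congr 1
    exact le_antisymm (othersCount_mono fun j _ h => (hω j).mpr h)
      (othersCount_mono fun j _ h => ⟨ω j, h⟩)

end Payoffs

section BestLocations

variable {ι M : Type*} {τ : ι → Type*} {val : ∀ i, τ i → M → ℝ}

lemma IsBestIn.unique (hinj : ∀ i (t : τ i), Function.Injective (val i t)) {i : ι} {t : τ i}
    {L : Finset M} {l₁ l₂ : M} (h₁ : IsBestIn val i t L l₁) (h₂ : IsBestIn val i t L l₂) :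
    l₁ = l₂ :=
  hinj i t (le_antisymm (h₂.2 _ h₁.1) (h₁.2 _ h₂.1))

lemma range_eq_of_isBestIn (hinj : ∀ i (t : τ i), Function.Injective (val i t)) {L : Finset M}
    {i : ι} (honto : ∀ l ∈ L, ∃ t : τ i, IsBestIn val i t L l) {f : τ i → M}
    (hf : ∀ t, IsBestIn val i t L (f t)) : Set.range f = L := by
  ext l
  refine ⟨fun ⟨t, ht⟩ => ht ▸ (hf t).1, fun hl => ?_⟩
  obtain ⟨t, ht⟩ := honto l hl
  exact ⟨t, (hf t).unique hinj ht⟩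

lemma Lset_eq_of_range_eq [Nonempty ι] {a : ∀ i, τ i → M} {S : Set M}
    (h : ∀ i, Set.range (a i) = S) : Lset a = S := by
  ext l
  refine ⟨fun ⟨i, t, hl⟩ => h i ▸ ⟨t, hl⟩, fun hl => ?_⟩
  obtain ⟨t, ht⟩ := (h (Classical.arbitrary ι)).symm ▸ hl
  exact ⟨_, t, ht⟩

end BestLocations

section Equilibrium

variable {ι M : Type*} [Fintype ι] [DecidableEq ι] [DecidableEq M] {τ : ι → Type*}
  [∀ i, Fintype (τ i)] [∀ i, Nonempty (τ i)] {val : ∀ i, τ i → M → ℝ} {a : ∀ i, τ i → M}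
  {i : ι} {t : τ i} {l : M}

/- A positive worst case at `l'` needs a player constant at `l'`, whose range `L` is then
`{l'}`. -/
lemma coordLexBR_of_isBestIn (hv : ∀ m, 0 ≤ val i t m) {L : Finset M}
    (hrange : ∀ j, Set.range (a j) = L) (hbest : IsBestIn val i t L (a i t)) :
    CoordLexBR val a i t (a i t) := by
  have hplays (j : ι) {m : M} : (∃ s, a j s = m) ↔ m ∈ L := by
    rw [← Finset.mem_coe, ← hrange j, Set.mem_range]
  refine ⟨fun l' => ?_, fun l' _ => ?_⟩
  · rw [coordWorst_eq (hv _), coordWorst_eq (hv _)]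
    by_cases hF : othersCount (fun j m => ∀ s, a j s = m) i l' = 0
    · rw [hF, meetPayoff_zero]
      exact meetPayoff_nonneg (hv _)
    obtain ⟨j, -, hj⟩ := exists_rel_of_othersCount_ne_zero hF
    obtain ⟨s, hs⟩ := (hplays j).mpr hbest.1
    rw [← hj s, hs]
  · rw [coordBest_eq (hv _), coordBest_eq (hv _)]
    by_cases hP : othersCount (fun j m => ∃ s, a j s = m) i l' = 0
    · rw [hP, meetPayoff_zero]
      exact meetPayoff_nonneg (hv _)
    obtain ⟨j, -, hj⟩ := exists_rel_of_othersCount_ne_zero hP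
    have hl' : l' ∈ L := (hplays j).mp hj
    exact meetPayoff_le_meetPayoff
      (othersCount_mono fun j _ _ => (hplays j).mpr hbest.1) (hbest.2 l' hl') (hv _)

lemma CoordLexBR.othersCount_forced_le (hv : ∀ m, 0 < val i t m ∧ val i t m < 1)
    (hbr : CoordLexBR val a i t l) (l' : M) :
    othersCount (fun j m => ∀ s, a j s = m) i l' ≤
      othersCount (fun j m => ∀ s, a j s = m) i l := by
  have h := hbr.1 l'
  rw [coordWorst_eq (hv _).1.le, coordWorst_eq (hv _).1.le] at h
  by_contra! hlt
  exact h.not_gt (meetPayoff_lt_meetPayoff hlt (hv _).2 (hv _).1)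

lemma CoordLexBR.othersCount_played_le (hv : ∀ m, 0 < val i t m ∧ val i t m < 1)
    (hbr : CoordLexBR val a i t l)
    (hw : ∀ m, coordWorst val a i t m = coordWorst val a i t l) (l' : M) :
    othersCount (fun j m => ∃ s, a j s = m) i l' ≤
      othersCount (fun j m => ∃ s, a j s = m) i l := by
  have h := hbr.2 l' (hw l')
  rw [coordBest_eq (hv _).1.le, coordBest_eq (hv _).1.le] at h
  by_contra! hlt
  exact h.not_gt (meetPayoff_lt_meetPayoff hlt (hv _).2 (hv _).1)

/- A player constant at `c` sees more constant players at `c` than anywhere else, so all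
constant players share `c`; every other player then secures a positive worst case only at `c`. -/
lemma CoordLexNE.eq_of_forall_eq (hNE : CoordLexNE val a)
    (hv : ∀ i t m, 0 < val i t m ∧ val i t m < 1) {j₀ : ι} {c : M} (hc : ∀ s, a j₀ s = c)
    (j : ι) (s : τ j) : a j s = c := by
  have hR (j : ι) (c : M) (hc : ∀ s, a j s = c) (l : M) :
      othersCount (fun j m => ∀ s, a j s = m) j l ≤
        othersCount (fun j m => ∀ s, a j s = m) j c := by
    have s := Classical.arbitrary (τ j)
    simpa only [hc s] using (hNE j s).othersCount_forced_le (hv j s) l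
  by_cases hj : j = j₀
  · subst hj
    exact hc s
  have hpos := othersCount_pos (R := fun j m => ∀ s, a j s = m) (Ne.symm hj) hc
  obtain ⟨k, -, hk⟩ := exists_rel_of_othersCount_ne_zero
    (hpos.trans_le ((hNE j s).othersCount_forced_le (hv j s) c)).ne'
  exact (hk (Classical.arbitrary _)).symm.trans (rel_of_othersCount_le hR hc hk _)

lemma CoordLexNE.exists_eq_of_exists_eq (hNE : CoordLexNE val a)
    (hv : ∀ i t m, 0 < val i t m ∧ val i t m < 1) (hfree : ∀ j l, ∃ s, a j s ≠ l) {j : ι} {l : M}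
    (hj : ∃ s, a j s = l) (i : ι) : ∃ s, a i s = l := by
  have s₀ := Classical.arbitrary (τ i)
  refine rel_of_othersCount_le (R := fun j m => ∃ s, a j s = m) (fun j c ⟨s, hs⟩ l => ?_) hj
    ⟨s₀, rfl⟩
  refine hs ▸ (hNE j s).othersCount_played_le (hv j s) (fun m => ?_) l
  rw [coordWorst_eq_zero (hv j s m).1.le (hfree · m),
    coordWorst_eq_zero (hv j s _).1.le (hfree · _)]

lemma CoordLexNE.val_le (hNE : CoordLexNE val a)
    (hv : ∀ i t m, 0 < val i t m ∧ val i t m < 1) (hι : 1 < Fintype.card ι)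
    (hfree : ∀ j l, ∃ s, a j s ≠ l) (i : ι) (t : τ i) {j : ι} (s : τ j) :
    val i t (a j s) ≤ val i t (a i t) := by
  have hplayed (m : M) (hm : ∃ j s, a j s = m) (k : ι) : ∃ s, a k s = m :=
    hNE.exists_eq_of_exists_eq hv hfree hm.choose_spec k
  have hcount : othersCount (fun j m => ∃ s, a j s = m) i (a j s) =
      othersCount (fun j m => ∃ s, a j s = m) i (a i t) :=
    le_antisymm (othersCount_mono fun k _ _ => hplayed _ ⟨i, t, rfl⟩ k)
      (othersCount_mono fun k _ _ => hplayed _ ⟨j, s, rfl⟩ k)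
  obtain ⟨k, hk⟩ := Fintype.exists_ne_of_one_lt_card hι i
  have hpos := othersCount_pos (R := fun j m => ∃ s, a j s = m) hk
    (hplayed (a i t) ⟨i, t, rfl⟩ k)
  have hbest := (hNE i t).2 (a j s) <| by
    rw [coordWorst_eq_zero (hv i t _).1.le (hfree · _),
      coordWorst_eq_zero (hv i t _).1.le (hfree · _)]
  rwa [coordBest_eq (hv i t _).1.le, coordBest_eq (hv i t _).1.le, hcount,
    meetPayoff_le_meetPayoff_iff hpos.ne'] at hbest

end Equilibrium

theorem stmt12_general (val : ∀ i, τ i → M → ℝ)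
    (hι : 1 < Fintype.card ι)
    (hinj : ∀ i (t : τ i), Function.Injective (val i t))
    (hrange : ∀ i (t : τ i) (l : M), 0 < val i t l ∧ val i t l < 1)
    (L : Finset M)
    (honto : ∀ i, ∀ l ∈ L, ∃ t : τ i, IsBestIn val i t L l) :
    (∀ a : ∀ i, τ i → M, (∀ i (t : τ i), IsBestIn val i t L (a i t)) →
      CoordLexNE val a ∧ Lset a = ↑L) ∧
    (∀ b : ∀ i, τ i → M, CoordLexNE val b → Lset b = ↑L →
      ∀ i (t : τ i), IsBestIn val i t L (b i t)) := by
  refine ⟨fun a ha => ?_, fun b hNE hLb i t => ?_⟩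
  · have hran (j : ι) : Set.range (a j) = L := range_eq_of_isBestIn hinj (honto j) (ha j)
    have : Nonempty ι := Fintype.card_pos_iff.mp (by omega)
    exact ⟨fun i t => coordLexBR_of_isBestIn (fun m => (hrange i t m).1.le) hran (ha i t),
      Lset_eq_of_range_eq hran⟩
  · have hplayed (m : M) : m ∈ L ↔ ∃ j s, b j s = m := by
      rw [← Finset.mem_coe, ← hLb]
      rfl
    refine ⟨(hplayed _).mpr ⟨i, t, rfl⟩, fun l hl => ?_⟩
    obtain ⟨j, s, rfl⟩ := (hplayed l).mp hl
    rcases em (∃ j₀ c, ∀ s, b j₀ s = c) with ⟨j₀, c, hc⟩ | hfree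
    · rw [hNE.eq_of_forall_eq hrange hc j s, hNE.eq_of_forall_eq hrange hc i t]
    · exact hNE.val_le hrange hι (by simpa using hfree) i t s

/-- In a coordination game with type ambiguity (with at least two players), for
a nonempty location set `L` such that every player's best-location map
`f^i : T^i → L` is onto `L`, the profile in which every type plays its best
location in `L` is the *unique* pure LEX Nash equilibrium `a` with
`L(a) = L`. -/
theorem stmt12 (val : ∀ i, τ i → M → ℝ)
    (hι : 1 < Fintype.card ι)
    (hinj : ∀ i (t : τ i), Function.Injective (val i t))
    (hrange : ∀ i (t : τ i) (l : M), 0 < val i t l ∧ val i t l < 1)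
    (L : Finset M) (hL : L.Nonempty)
    (honto : ∀ i, ∀ l ∈ L, ∃ t : τ i, IsBestIn val i t L l) :
    (∀ a : ∀ i, τ i → M, (∀ i (t : τ i), IsBestIn val i t L (a i t)) →
      CoordLexNE val a ∧ Lset a = ↑L) ∧
    (∀ b : ∀ i, τ i → M, CoordLexNE val b → Lset b = ↑L →
      ∀ i (t : τ i), IsBestIn val i t L (b i t)) :=
  stmt12_general val hι hinj hrange L honto

end Coordination
end

section
/- In a coordination game on ℝ with Euclidean preferences, a location set L = {l_1 < l_2 < ⋯ < l_k} with k ≥ 2 is a LEX equilibrium set if and only if for every player i there exist ideal points x_1 < x_2 < ⋯ < x_k in player i's set of possible ideal points such that x_t < (l_t + l_{t+1})/2 < x_{t+1} for all t = 1,…,k−1. -/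
/-!
For `a < b`, an ideal point `x` prefers `a` to `b` exactly when `x < (a + b) / 2`.
Hence `l j` is the best location for `x` iff `x` lies strictly between the midpoints
of the two gaps adjacent to `l j`; one such ideal point per location is precisely
an increasing sequence separated by the consecutive midpoints.
-/

open Finset

/-- `l` is the most preferred location in `L` for a Euclidean type with ideal
point `x`: it is strictly closer to `x` than every other location of `L`. -/
def EucBest (x : ℝ) (L : Finset ℝ) (l : ℝ) : Prop :=
  l ∈ L ∧ ∀ l' ∈ L, l' ≠ l → |l - x| < |l' - x|

lemma abs_sub_lt_abs_sub_iff_lt_midpoint {a b x : ℝ} (h : a < b) :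
    |a - x| < |b - x| ↔ x < (a + b) / 2 := by
  rw [← sq_lt_sq]
  constructor <;> intro <;> nlinarith

lemma abs_sub_lt_abs_sub_iff_midpoint_lt {a b x : ℝ} (h : a < b) :
    |b - x| < |a - x| ↔ (a + b) / 2 < x := by
  rw [← sq_lt_sq]
  constructor <;> intro <;> nlinarith

section FinIndexed

variable {k : ℕ} {l : Fin k → ℝ}

lemma eucBest_image_iff (hl : StrictMono l) {x : ℝ} {j : Fin k} :
    EucBest x (univ.image l) (l j) ↔
      (∀ j' < j, (l j' + l j) / 2 < x) ∧ ∀ j', j < j' → x < (l j + l j') / 2 := by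
  simp only [EucBest, mem_image_of_mem l (mem_univ j), true_and, mem_image, mem_univ,
    forall_exists_index, forall_apply_eq_imp_iff]
  simp only [hl.injective.ne_iff]
  refine ⟨fun h => ⟨fun j' hj' => ?_, fun j' hj' => ?_⟩, fun ⟨hlt, hgt⟩ j' hne => ?_⟩
  · exact (abs_sub_lt_abs_sub_iff_midpoint_lt (hl hj')).mp (h j' hj'.ne)
  · exact (abs_sub_lt_abs_sub_iff_lt_midpoint (hl hj')).mp (h j' hj'.ne')
  · rcases lt_or_gt_of_ne hne with hj' | hj'
    · exact (abs_sub_lt_abs_sub_iff_midpoint_lt (hl hj')).mpr (hlt j' hj')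
    · exact (abs_sub_lt_abs_sub_iff_lt_midpoint (hl hj')).mpr (hgt j' hj')

/-- The midpoint of `l j < l j'` lies between the midpoint of the gap right of
`l j` and that of the gap left of `l j'`. -/
lemma midpoint_separates_of_consecutive (hl : Monotone l) {x : Fin k → ℝ}
    (hx : ∀ t : ℕ, (ht : t + 1 < k) →
      x ⟨t, t.lt_of_succ_lt ht⟩ < (l ⟨t, t.lt_of_succ_lt ht⟩ + l ⟨t + 1, ht⟩) / 2 ∧
      (l ⟨t, t.lt_of_succ_lt ht⟩ + l ⟨t + 1, ht⟩) / 2 < x ⟨t + 1, ht⟩)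
    {j j' : Fin k} (hjj' : j < j') :
    x j < (l j + l j') / 2 ∧ (l j + l j') / 2 < x j' := by
  obtain ⟨n, hn⟩ := j
  obtain ⟨_ | t, ht⟩ := j'
  · exact absurd hjj' (by simp [Fin.lt_def])
  rw [Fin.mk_lt_mk] at hjj'
  have hleft : l ⟨n + 1, by omega⟩ ≤ l ⟨t + 1, ht⟩ := hl (Fin.mk_le_mk.mpr (by omega))
  have hright : l ⟨n, hn⟩ ≤ l ⟨t, by omega⟩ := hl (Fin.mk_le_mk.mpr (by omega))
  have hxj := (hx n (by omega)).1
  have hxj' := (hx t ht).2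
  constructor <;> linarith

end FinIndexed

/-- In a coordination game on ℝ with Euclidean preferences (player `i`'s types
are the Euclidean preferences derived from the set `X i` of possible ideal
points), a location set `L = {l 0 < l 1 < ⋯ < l (k-1)}` with `k ≥ 2` is a LEX
equilibrium set (every player's best-location map is onto `L`) if and only if
for every player `i` there exist ideal points `x 0 < x 1 < ⋯ < x (k-1)` in
`X i` such that `x t < (l t + l (t+1))/2 < x (t+1)` for all `t`. -/
theorem stmt17 {ι : Type*} (X : ι → Finset ℝ) (k : ℕ)
    (l : Fin k → ℝ) (hl : StrictMono l) :
    (∀ i, ∀ j : Fin k, ∃ x ∈ X i, EucBest x (Finset.univ.image l) (l j)) ↔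
    (∀ i, ∃ x : Fin k → ℝ, StrictMono x ∧ (∀ t, x t ∈ X i) ∧
      ∀ t : ℕ, (ht : t + 1 < k) →
        x ⟨t, by omega⟩ < (l ⟨t, by omega⟩ + l ⟨t + 1, ht⟩) / 2 ∧
        (l ⟨t, by omega⟩ + l ⟨t + 1, ht⟩) / 2 < x ⟨t + 1, ht⟩) := by
  simp only [eucBest_image_iff hl]
  constructor
  · intro h i
    choose x hxX hbest using h i
    have separates {j j' : Fin k} (hjj' : j < j') :
        x j < (l j + l j') / 2 ∧ (l j + l j') / 2 < x j' :=
      ⟨(hbest j).2 j' hjj', (hbest j').1 j hjj'⟩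
    refine ⟨x, fun j j' hjj' => (separates hjj').1.trans (separates hjj').2, hxX,
      fun t ht => separates (Fin.mk_lt_mk.mpr (Nat.lt_succ_self t))⟩
  · intro h i j
    obtain ⟨x, -, hxX, hx⟩ := h i
    exact ⟨x j, hxX j, fun j' hj' => (midpoint_separates_of_consecutive hl.monotone hx hj').2,
      fun j' hj' => (midpoint_separates_of_consecutive hl.monotone hx hj').1⟩
end
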